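/- Let (T,F) be a graph-labelled tree and let e be a tree-edge of T not incident to a leaf. Let (L_1, L_2) be the bipartition of the leaves of T into the leaf sets of the two components of T − e. Then (L_1, L_2) is a split of the accessibility graph G(T,F). -/

import Mathlib

/-!
Cutting the tree-edge `uv` separates the leaves into those on the `u`-side and those on the
`v`-side. If a leaf `a` on the `v`-side sees a leaf `y` on the `u`-side, the admissible path from
`a` to `y` must cross `uv` from `v` to `u`, so its initial segment `a … v u` is admissible.
Symmetrically, for `b` on the `u`-side seeing `x` on the `v`-side, the segment `b … u v` is
admissible. Admissibility is a condition at each internal node only, so the two segments glue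
at the edge `uv` into an admissible path `a … v u … b`, and the sides being disjoint makes it a
path.
-/

open SimpleGraph

variable {V : Type}

/-- A vertex of a tree is a leaf if it has exactly one neighbour. -/
def IsLeaf (T : SimpleGraph V) (v : V) : Prop := ∃! w, T.Adj v w

/-- Admissibility of a walk in a graph-labelled tree: at every internal vertex of the
walk, the marker vertices corresponding to the two consecutive tree-edges are adjacent
in the label graph. -/
inductive Admissible (T : SimpleGraph V) (F : ∀ v : V, SimpleGraph (T.neighborSet v)) :
    ∀ {a b : V}, T.Walk a b → Prop
  | nil {a : V} : Admissible T F (SimpleGraph.Walk.nil : T.Walk a a)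
  | single {a b : V} (h : T.Adj a b) :
      Admissible T F (SimpleGraph.Walk.cons h SimpleGraph.Walk.nil)
  | cons {a v b c : V} (h1 : T.Adj a v) (h2 : T.Adj v b) (p : T.Walk b c)
      (hadj : (F v).Adj ⟨a, h1.symm⟩ ⟨b, h2⟩)
      (hp : Admissible T F (SimpleGraph.Walk.cons h2 p)) :
      Admissible T F (SimpleGraph.Walk.cons h1 (SimpleGraph.Walk.cons h2 p))

/-- `b` is accessible from `a`: the (unique) path joining them is admissible. -/
def Accessible (T : SimpleGraph V) (F : ∀ v : V, SimpleGraph (T.neighborSet v))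
    (a b : V) : Prop :=
  ∃ p : T.Walk a b, p.IsPath ∧ Admissible T F p

/-- The accessibility graph of a graph-labelled tree: vertices are the leaves of the
tree, two leaves being adjacent iff one is accessible from the other. -/
def accGraph (T : SimpleGraph V) (F : ∀ v : V, SimpleGraph (T.neighborSet v)) :
    SimpleGraph {v : V // IsLeaf T v} :=
  SimpleGraph.fromRel (fun x y => Accessible T F ↑x ↑y)

/-- The (external) neighbourhood of a set of vertices. -/
def extNbhd (G : SimpleGraph V) (S : Set V) : Set V :=
  {x | x ∉ S ∧ ∃ y ∈ S, G.Adj x y}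

/-- A split of a graph: a bipartition into two parts of size at least two such that
every vertex of `N(A)` is adjacent to every vertex of `N(B)`. -/
def IsSplit (G : SimpleGraph V) (A B : Set V) : Prop :=
  A ∪ B = Set.univ ∧ Disjoint A B ∧ 2 ≤ A.ncard ∧ 2 ≤ B.ncard ∧
    ∀ a ∈ extNbhd G A, ∀ b ∈ extNbhd G B, G.Adj a b

section Admissible

variable {T : SimpleGraph V} {F : ∀ v : V, SimpleGraph (T.neighborSet v)}

lemma Admissible.tail {a b c : V} {h : T.Adj a b} {p : T.Walk b c}
    (hp : Admissible T F (.cons h p)) : Admissible T F p := by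
  cases hp with
  | single => exact .nil
  | cons _ _ _ _ hp => exact hp

lemma Admissible.adj_of_cons_cons {a x b c : V} {h1 : T.Adj a x} {h2 : T.Adj x b}
    {p : T.Walk b c} (hp : Admissible T F (.cons h1 (.cons h2 p))) :
    (F x).Adj ⟨a, h1.symm⟩ ⟨b, h2⟩ := by
  cases hp with
  | cons _ _ _ hadj _ => exact hadj

lemma Admissible.append_cons {a x y b : V} {p : T.Walk a x} {h : T.Adj x y} {r : T.Walk y b}
    (hp : Admissible T F (p.concat h)) (hr : Admissible T F (.cons h r)) :
    Admissible T F (p.append (.cons h r)) := by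
  induction p with
  | nil => simpa using hr
  | cons h₁ p ih =>
    rw [Walk.concat_cons] at hp
    cases p with
    | nil => exact .cons _ _ _ hp.adj_of_cons_cons hr
    | cons h₂ p =>
      rw [Walk.concat_cons] at hp
      have := ih hp.tail hr
      rw [Walk.cons_append] at this ⊢
      exact .cons _ _ _ hp.adj_of_cons_cons this

lemma Admissible.reverse {a b : V} {p : T.Walk a b} (hp : Admissible T F p) :
    Admissible T F p.reverse := by
  induction hp with
  | nil => exact .nil
  | single h => simpa using Admissible.single h.symm
  | cons h₁ h₂ p hadj _ ih =>
    have hlast : Admissible T F (.cons h₂.symm (.cons h₁.symm .nil)) :=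
      .cons _ _ _ hadj.symm (.single h₁.symm)
    rw [Walk.reverse_cons, Walk.reverse_cons, ← Walk.append_assoc, Walk.cons_nil_append]
    exact Admissible.append_cons (by rwa [Walk.concat_eq_append, ← Walk.reverse_cons]) hlast

lemma Admissible.of_append_left {a b c : V} {p : T.Walk a b} {q : T.Walk b c}
    (h : Admissible T F (p.append q)) : Admissible T F p := by
  induction p with
  | nil => exact .nil
  | cons h₁ p ih =>
    rw [Walk.cons_append] at h
    cases p with
    | nil => exact .single h₁
    | cons h₂ p =>
      rw [Walk.cons_append] at h
      exact .cons _ _ _ h.adj_of_cons_cons (ih (by rw [Walk.cons_append]; exact h.tail))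

lemma Admissible.concat_of_append_cons {a x y b : V} {p : T.Walk a x} {h : T.Adj x y}
    {q : T.Walk y b} (hpq : Admissible T F (p.append (.cons h q))) :
    Admissible T F (p.concat h) := by
  rw [← Walk.cons_nil_append, Walk.append_assoc, ← Walk.concat_eq_append] at hpq
  exact hpq.of_append_left

lemma Accessible.symm {a b : V} (h : Accessible T F a b) : Accessible T F b a :=
  let ⟨p, hp, hadm⟩ := h
  ⟨p.reverse, hp.reverse, hadm.reverse⟩

lemma accGraph_adj {a b : {v : V // IsLeaf T v}} :
    (accGraph T F).Adj a b ↔ a ≠ b ∧ Accessible T F a b := by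
  simp only [accGraph, fromRel_adj, or_iff_left_of_imp Accessible.symm]

end Admissible

namespace SimpleGraph

section DeleteEdge

variable {G : SimpleGraph V} {u v : V}

lemma Walk.reachable_deleteEdges_or {a z : V} (w : G.Walk a z) :
    (G.deleteEdges {s(u, v)}).Reachable a z ∨ (G.deleteEdges {s(u, v)}).Reachable a u ∨
      (G.deleteEdges {s(u, v)}).Reachable a v := by
  induction w with
  | nil => exact .inl .rfl
  | @cons a b z h p ih =>
    by_cases he : s(a, b) = s(u, v)
    · rcases Sym2.eq_iff.mp he with ⟨rfl, rfl⟩ | ⟨rfl, rfl⟩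
      · exact .inr (.inl .rfl)
      · exact .inr (.inr .rfl)
    · have hab : (G.deleteEdges {s(u, v)}).Adj a b := deleteEdges_adj.mpr ⟨h, he⟩
      exact ih.imp hab.reachable.trans (.imp hab.reachable.trans hab.reachable.trans)

lemma Preconnected.reachable_deleteEdges_or (hG : G.Preconnected) (a : V) :
    (G.deleteEdges {s(u, v)}).Reachable a u ∨ (G.deleteEdges {s(u, v)}).Reachable a v := by
  obtain ⟨w⟩ := hG a u
  rcases w.reachable_deleteEdges_or (u := u) (v := v) with h | h | h
  exacts [.inl h, .inl h, .inr h]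

lemma Walk.exists_eq_append_cons_of_reachable (huv : ¬ (G.deleteEdges {s(u, v)}).Reachable u v)
    {a y : V} (P : G.Walk a y) (ha : (G.deleteEdges {s(u, v)}).Reachable a v)
    (hy : (G.deleteEdges {s(u, v)}).Reachable y u) :
    ∃ (p : G.Walk a v) (h : G.Adj v u) (q : G.Walk u y), P = p.append (.cons h q) ∧
      ∀ x ∈ p.support, (G.deleteEdges {s(u, v)}).Reachable x v := by
  induction P with
  | nil => exact absurd (hy.symm.trans ha) huv
  | @cons a b y h P ih =>
    by_cases he : s(a, b) = s(u, v)
    · rcases Sym2.eq_iff.mp he with ⟨rfl, rfl⟩ | ⟨rfl, rfl⟩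
      · exact absurd ha huv
      · exact ⟨.nil, h, P, rfl, by simp⟩
    · have hba : (G.deleteEdges {s(u, v)}).Adj b a :=
        deleteEdges_adj.mpr ⟨h.symm, by rwa [Set.mem_singleton_iff, Sym2.eq_swap]⟩
      obtain ⟨p, hvu, q, rfl, hp⟩ := ih (hba.reachable.trans ha) hy
      refine ⟨.cons h p, hvu, q, rfl, ?_⟩
      simp only [Walk.support_cons, List.mem_cons, forall_eq_or_imp]
      exact ⟨ha, hp⟩

end DeleteEdge

lemma Walk.IsPath.append_cons {G : SimpleGraph V} {a x y b : V} {p : G.Walk a x}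
    {h : G.Adj x y} {q : G.Walk y b} (hp : p.IsPath) (hq : q.IsPath)
    (hpq : ∀ z ∈ p.support, z ∉ q.support) : (p.append (.cons h q)).IsPath := by
  rw [Walk.isPath_def, Walk.support_append, Walk.support_cons, List.tail_cons]
  exact hp.support_nodup.append hq.support_nodup hpq

end SimpleGraph

lemma Accessible.of_crossing {T : SimpleGraph V} {F : ∀ v : V, SimpleGraph (T.neighborSet v)}
    {u v a b x y : V} (huv : ¬ (T.deleteEdges {s(u, v)}).Reachable u v)
    (ha : (T.deleteEdges {s(u, v)}).Reachable a v) (hy : (T.deleteEdges {s(u, v)}).Reachable y u)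
    (hb : (T.deleteEdges {s(u, v)}).Reachable b u) (hx : (T.deleteEdges {s(u, v)}).Reachable x v)
    (hay : Accessible T F a y) (hbx : Accessible T F b x) : Accessible T F a b := by
  have hswap : T.deleteEdges {s(v, u)} = T.deleteEdges {s(u, v)} := by rw [Sym2.eq_swap]
  obtain ⟨P, hP, hadmP⟩ := hay
  obtain ⟨Q, hQ, hadmQ⟩ := hbx
  obtain ⟨p, hvu, _, rfl, hpv⟩ := P.exists_eq_append_cons_of_reachable huv ha hy
  obtain ⟨q, _, _, rfl, hqu⟩ := Q.exists_eq_append_cons_of_reachable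
    (hswap ▸ fun h => huv h.symm) (hswap ▸ hb) (hswap ▸ hx)
  rw [hswap] at hqu
  have hadm_q : Admissible T F (.cons hvu q.reverse) := by
    simpa [Walk.reverse_concat] using hadmQ.concat_of_append_cons.reverse
  refine ⟨_, Walk.IsPath.append_cons hP.of_append_left hQ.of_append_left.reverse ?_,
    hadmP.concat_of_append_cons.append_cons hadm_q⟩
  intro z hzp hzq
  rw [Walk.support_reverse, List.mem_reverse] at hzq
  exact huv ((hqu z hzq).symm.trans (hpv z hzp))

theorem stmt4_general (T : SimpleGraph V) (hT : T.IsTree)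
    (F : ∀ v : V, SimpleGraph (T.neighborSet v))
    (u v : V) (huv : T.Adj u v)
    (L1 L2 : Set {l : V // IsLeaf T l})
     (hL1 : L1 = {l : {x : V // IsLeaf T x} | (T.deleteEdges {s(u, v)}).Reachable (l : V) u})
     (hL2 : L2 = {l : {x : V // IsLeaf T x} | (T.deleteEdges {s(u, v)}).Reachable (l : V) v})
    (h1 : 2 ≤ L1.ncard) (h2 : 2 ≤ L2.ncard) :
    IsSplit (accGraph T F) L1 L2 := by
  subst hL1 hL2
  have hbridge : ¬ (T.deleteEdges {s(u, v)}).Reachable u v :=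
    isBridge_iff.mp (isAcyclic_iff_forall_adj_isBridge.mp hT.isAcyclic huv)
  have hside := hT.connected.preconnected.reachable_deleteEdges_or (u := u) (v := v)
  have hdisj (z : V) (hzu : (T.deleteEdges {s(u, v)}).Reachable z u)
      (hzv : (T.deleteEdges {s(u, v)}).Reachable z v) : False := hbridge (hzu.symm.trans hzv)
  refine ⟨Set.eq_univ_of_forall fun l => hside l, Set.disjoint_left.mpr fun l => hdisj l, h1, h2,
    ?_⟩
  rintro a ⟨haL1, y, hy, hay⟩ b ⟨hbL2, x, hx, hbx⟩
  have ha := (hside a).resolve_left haL1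
  have hb := (hside b).resolve_right hbL2
  refine accGraph_adj.mpr ⟨fun hab => hdisj a (hab ▸ hb) ha, ?_⟩
  exact (accGraph_adj.mp hay).2.of_crossing hbridge ha hy hb hx (accGraph_adj.mp hbx).2

/-- removing an internal tree-edge `uv` of a graph-labelled tree yields a
bipartition of the leaves that is a split of the accessibility graph. -/
theorem stmt4 [Fintype V] (T : SimpleGraph V) (hT : T.IsTree)
    (F : ∀ v : V, SimpleGraph (T.neighborSet v))
    (u v : V) (huv : T.Adj u v) (hu : ¬ IsLeaf T u) (hv : ¬ IsLeaf T v)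
    (L1 L2 : Set {l : V // IsLeaf T l})
     (hL1 : L1 = {l : {x : V // IsLeaf T x} | (T.deleteEdges {s(u, v)}).Reachable (l : V) u})
     (hL2 : L2 = {l : {x : V // IsLeaf T x} | (T.deleteEdges {s(u, v)}).Reachable (l : V) v})
    (h1 : 2 ≤ L1.ncard) (h2 : 2 ≤ L2.ncard) :
    IsSplit (accGraph T F) L1 L2 :=
  stmt4_general T hT F u v huv L1 L2 hL1 hL2 h1 h2
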